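/- arXiv:math/0612587 — 6 statements merged into one kernel-verified Lean document; each statement's English description precedes it below -/
import Mathlib

section
/- Under the same hypotheses, for every θ ∈ V one has S(d_T P θ) = S θ; consequently S(θ − d_T P θ) = 0, i.e., the image of the projection id − d_T P is contained in the kernel of S. -/
private lemma key_comm {V : Type*} [AddCommGroup V] [Module ℚ V]
    (S dT : V →ₗ[ℚ] V) (r : ℕ)
    (hcomm : ∀ v : V, S (dT v) = dT (S v) + (r : ℚ) • v) :
    ∀ (p : ℕ) (v : V), S ((dT ^ (p + 1)) v)
      = (dT ^ (p + 1)) (S v) + ((r : ℚ) * (p + 1)) • (dT ^ p) v := by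
  intro p
  induction p with
  | zero => intro v; simpa using hcomm v
  | succ p ih =>
      intro v
      have h1 : (dT ^ (p + 2)) v = (dT ^ (p + 1)) (dT v) := by
        rw [pow_succ]; rfl
      rw [h1, ih (dT v), hcomm v]
      have h2 : (dT ^ (p + 1)) (dT (S v) + (r : ℚ) • v)
          = (dT ^ (p + 2)) (S v) + (r : ℚ) • (dT ^ (p + 1)) v := by
        rw [map_add, map_smul]
        congr 1
      rw [h2]
      have h3 : (dT ^ p) (dT v) = (dT ^ (p + 1)) v := by
        rw [pow_succ]; rfl
      rw [h3, add_assoc, ← add_smul]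
      congr 2
      push_cast
      ring

/-- With `S`, `d_T`, `P` as before (`S d_T − d_T S = r • id`, `r ≥ 1`
an integer, `S` locally nilpotent, `P = Σ_p (−1)^p/(r^(p+1)(p+1)!) d_T^p S^(p+1)`),
for every `θ ∈ V` one has `S(d_T P θ) = S θ`, and consequently
`S(θ − d_T P θ) = 0`: the image of the projection `id − d_T P` is contained in
the kernel of `S`. -/
theorem S_dT_P_eq_S {V : Type*} [AddCommGroup V] [Module ℚ V]
    (S dT P : V →ₗ[ℚ] V) (r : ℕ) (hr : 1 ≤ r)
    (hcomm : ∀ v : V, S (dT v) = dT (S v) + (r : ℚ) • v)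
    (hnil : ∀ v : V, ∃ N : ℕ, (S ^ N) v = 0)
    (hP : ∀ (θ : V) (N : ℕ), (S ^ (N + 1)) θ = 0 →
      P θ = ∑ p ∈ Finset.range (N + 1),
        ((-1 : ℚ) ^ p / ((r : ℚ) ^ (p + 1) * ((p + 1).factorial : ℚ))) •
          ((dT ^ p) ((S ^ (p + 1)) θ))) :
    ∀ θ : V, S (dT (P θ)) = S θ ∧ S (θ - dT (P θ)) = 0 := by
  have hr0 : (r : ℚ) ≠ 0 := by positivity
  have hpow : ∀ (f : V →ₗ[ℚ] V) (n : ℕ) (v : V), (f ^ (n + 1)) v = f ((f ^ n) v) := by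
    intro f n v; rw [pow_succ']; rfl
  intro θ
  obtain ⟨N, hN⟩ := hnil θ
  have hN1 : (S ^ (N + 1)) θ = 0 := by
    rw [hpow S N θ, hN, map_zero]
  have hN2 : (S ^ (N + 2)) θ = 0 := by
    rw [hpow S (N + 1) θ, hN1, map_zero]
  set g : ℕ → V := fun p =>
    ((-1 : ℚ) ^ p / ((r : ℚ) ^ p * (p.factorial : ℚ))) • (dT ^ p) ((S ^ (p + 1)) θ)
    with hg
  have main : S (dT (P θ)) = S θ := by
    rw [hP θ N hN1, map_sum, map_sum]
    have hterm : ∀ p ∈ Finset.range (N + 1),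
        S (dT (((-1 : ℚ) ^ p / ((r : ℚ) ^ (p + 1) * ((p + 1).factorial : ℚ))) •
          (dT ^ p) ((S ^ (p + 1)) θ))) = g p - g (p + 1) := by
      intro p _
      rw [map_smul, map_smul]
      have h1 : dT ((dT ^ p) ((S ^ (p + 1)) θ)) = (dT ^ (p + 1)) ((S ^ (p + 1)) θ) :=
        (hpow dT p _).symm
      rw [h1, key_comm S dT r hcomm p ((S ^ (p + 1)) θ)]
      have h2 : S ((S ^ (p + 1)) θ) = (S ^ (p + 2)) θ :=
        (hpow S (p + 1) θ).symm
      rw [h2, smul_add, hg]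
      simp only [smul_smul]
      rw [sub_eq_add_neg, add_comm]
      congr 1
      · congr 1
        have hfac : (((p + 1).factorial : ℚ)) = ((p.factorial : ℚ)) * (p + 1) := by
          rw [Nat.factorial_succ]; push_cast; ring
        have hfp : ((p.factorial : ℚ)) ≠ 0 := by
          exact_mod_cast Nat.factorial_ne_zero p
        field_simp [hfac]
        push_cast [Nat.factorial_succ]; ring
      · rw [← neg_smul]
        congr 1
        have hfp : (((p + 1).factorial : ℚ)) ≠ 0 := by
          exact_mod_cast Nat.factorial_ne_zero (p + 1)
        field_simp
        ring
    rw [Finset.sum_congr rfl hterm, Finset.sum_range_sub' g]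
    have hgN : g (N + 1) = 0 := by
      rw [hg]; simp [hN2]
    rw [hgN, sub_zero, hg]
    simp
  exact ⟨main, by rw [map_sub, main, sub_self]⟩
end

section
/- Under the same hypotheses, define Ψ = ker S ⊆ V. Then the projection id − d_T P maps V onto Ψ: an element θ ∈ V satisfies θ = (id − d_T P)θ if and only if S θ = 0. In particular, if S θ = 0 then P θ = 0. -/
/-- With `S`, `d_T`, `P` as before, let `Ψ = ker S`.  The projection
`id − d_T P` maps `V` onto `Ψ`: an element `θ` satisfies `θ = (id − d_T P) θ`
if and only if `S θ = 0`.  In particular, if `S θ = 0` then `P θ = 0`. -/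
theorem projection_image_is_ker_S {V : Type*} [AddCommGroup V] [Module ℚ V]
    (S dT P : V →ₗ[ℚ] V) (r : ℕ) (hr : 1 ≤ r)
    (hcomm : ∀ v : V, S (dT v) = dT (S v) + (r : ℚ) • v)
    (hnil : ∀ v : V, ∃ N : ℕ, (S ^ N) v = 0)
    (hP : ∀ (θ : V) (N : ℕ), (S ^ (N + 1)) θ = 0 →
      P θ = ∑ p ∈ Finset.range (N + 1),
        ((-1 : ℚ) ^ p / ((r : ℚ) ^ (p + 1) * ((p + 1).factorial : ℚ))) •
          ((dT ^ p) ((S ^ (p + 1)) θ))) :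
    ∀ θ : V, (θ - dT (P θ) = θ ↔ S θ = 0) ∧ (S θ = 0 → P θ = 0) := by
  have hr0 : (r : ℚ) ≠ 0 := Nat.cast_ne_zero.mpr (by omega)
  -- commutator power lemma: S ∘ dT^{k+1} = dT^{k+1} ∘ S + (k+1) r • dT^k
  have comm_pow : ∀ (k : ℕ) (w : V),
      S (dT ((dT ^ k) w)) = dT ((dT ^ k) (S w)) + (((k + 1 : ℕ) : ℚ) * r) • ((dT ^ k) w) := by
    intro k
    induction k with
    | zero => intro w; simpa using hcomm w
    | succ k ih =>
      intro w
      have h1 : (dT ^ (k + 1)) w = (dT ^ k) (dT w) := by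
        rw [pow_succ dT k, Module.End.mul_apply]
      have h2 : (dT ^ (k + 1)) (S w) = (dT ^ k) (dT (S w)) := by
        rw [pow_succ dT k, Module.End.mul_apply]
      have h3 : dT ((dT ^ k) w) = (dT ^ k) (dT w) := by
        rw [← Module.End.mul_apply, ← pow_succ' dT k, pow_succ dT k, Module.End.mul_apply]
      rw [h1, h2, ih (dT w), hcomm w, map_add, map_smul, map_add, map_smul, h3]
      push_cast
      module
  intro θ
  have hP0 : S θ = 0 → P θ = 0 := by
    intro hS
    have h1 : (S ^ (0 + 1)) θ = 0 := by simpa using hS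
    rw [hP θ 0 h1]
    simp [hS]
  have key : S (dT (P θ)) = S θ := by
    obtain ⟨N, hN⟩ := hnil θ
    have hN1 : (S ^ (N + 1)) θ = 0 := by
      rw [pow_succ' S N, Module.End.mul_apply, hN, map_zero]
    set f : ℕ → V := fun p =>
      ((-1 : ℚ) ^ p / ((r : ℚ) ^ p * (p.factorial : ℚ))) • ((dT ^ p) ((S ^ (p + 1)) θ)) with hf
    have hfN : f (N + 1) = 0 := by
      have h0 : (S ^ (N + 1 + 1)) θ = 0 := by
        rw [pow_succ' S (N + 1), Module.End.mul_apply, hN1, map_zero]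
      simp [hf, h0]
    have hf0 : f 0 = S θ := by simp [hf]
    have term : ∀ p : ℕ,
        ((-1 : ℚ) ^ p / ((r : ℚ) ^ (p + 1) * ((p + 1).factorial : ℚ))) •
          (S (dT ((dT ^ p) ((S ^ (p + 1)) θ)))) = f p - f (p + 1) := by
      intro p
      have hS2 : S ((S ^ (p + 1)) θ) = (S ^ (p + 1 + 1)) θ := by
        rw [pow_succ' S (p + 1), Module.End.mul_apply]
      have hd2 : dT ((dT ^ p) ((S ^ (p + 1 + 1)) θ)) = (dT ^ (p + 1)) ((S ^ (p + 1 + 1)) θ) := by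
        rw [pow_succ' dT p, Module.End.mul_apply, ← Module.End.mul_apply dT (dT ^ p),
          ← pow_succ' dT p, pow_succ' dT p, Module.End.mul_apply]
      rw [comm_pow p ((S ^ (p + 1)) θ), hS2, hd2, smul_add, smul_smul]
      have c1 : ((-1 : ℚ) ^ p / ((r : ℚ) ^ (p + 1) * ((p + 1).factorial : ℚ))) *
          (((p + 1 : ℕ) : ℚ) * r) = (-1 : ℚ) ^ p / ((r : ℚ) ^ p * (p.factorial : ℚ)) := by
        have hfac : (((p + 1).factorial : ℚ)) = ((p + 1 : ℕ) : ℚ) * (p.factorial : ℚ) := by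
          rw [Nat.factorial_succ]; push_cast; ring
        have hp1 : ((p + 1 : ℕ) : ℚ) ≠ 0 := by positivity
        have hpf : (p.factorial : ℚ) ≠ 0 := Nat.cast_ne_zero.mpr p.factorial_ne_zero
        rw [hfac]
        field_simp
        ring
      have c2 : ((-1 : ℚ) ^ p / ((r : ℚ) ^ (p + 1) * ((p + 1).factorial : ℚ))) =
          -((-1 : ℚ) ^ (p + 1) / ((r : ℚ) ^ (p + 1) * ((p + 1).factorial : ℚ))) := by
        rw [pow_succ]; ring
      rw [c1, c2]
      simp only [hf]
      module
    calc S (dT (P θ)) = ∑ p ∈ Finset.range (N + 1), (f p - f (p + 1)) := by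
          rw [hP θ N hN1, map_sum, map_sum]
          refine Finset.sum_congr rfl fun p _ => ?_
          rw [map_smul, map_smul, term p]
      _ = f 0 - f (N + 1) := Finset.sum_range_sub' f (N + 1)
      _ = S θ := by rw [hf0, hfN, sub_zero]
  refine ⟨⟨fun h => ?_, fun hS => ?_⟩, hP0⟩
  · have h0 : dT (P θ) = 0 := sub_eq_self.mp h
    rw [← key, h0, map_zero]
  · rw [hP0 hS, map_zero, sub_zero]
end

section
/- Under the same hypotheses, each equivalence class in V / d_T V contains exactly one element of Ψ = ker S; namely, θ − d_T P θ is the unique representative of [θ] lying in ker S. Equivalently, V = ker S ⊕ d_T(V) as a direct sum decomposition induced by the projection id − d_T P. -/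
open Finset

section Aux

variable {V : Type*} [AddCommGroup V] [Module ℚ V]

private lemma comm_dT_pow (S dT : V →ₗ[ℚ] V) (r : ℕ)
    (hcomm : ∀ v : V, S (dT v) = dT (S v) + (r : ℚ) • v) :
    ∀ (p : ℕ) (v : V), S ((dT ^ (p + 1)) v) =
      (dT ^ (p + 1)) (S v) + (((p + 1) * r : ℕ) : ℚ) • (dT ^ p) v := by
  intro p
  induction p with
  | zero => intro v; simpa using hcomm v
  | succ p ih =>
    intro v
    have h1 : (dT ^ (p + 2)) v = (dT ^ (p + 1)) (dT v) := by
      rw [pow_succ]; rfl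
    have h1' : (dT ^ (p + 2)) (S v) = (dT ^ (p + 1)) (dT (S v)) := by
      rw [pow_succ]; rfl
    have h2 : (dT ^ p) (dT v) = (dT ^ (p + 1)) v := by rw [pow_succ]; rfl
    rw [h1, ih (dT v), hcomm v, map_add, map_smul, h1', h2]
    have h3 : (((p + 2) * r : ℕ) : ℚ) = (r : ℚ) + (((p + 1) * r : ℕ) : ℚ) := by
      push_cast; ring
    rw [h3, add_smul]
    abel

private lemma comm_S_pow (S dT : V →ₗ[ℚ] V) (r : ℕ)
    (hcomm : ∀ v : V, S (dT v) = dT (S v) + (r : ℚ) • v) :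
    ∀ (n : ℕ) (v : V), (S ^ (n + 1)) (dT v) =
      dT ((S ^ (n + 1)) v) + (((n + 1) * r : ℕ) : ℚ) • (S ^ n) v := by
  intro n
  induction n with
  | zero => intro v; simpa using hcomm v
  | succ n ih =>
    intro v
    have h1 : (S ^ (n + 2)) (dT v) = (S ^ (n + 1)) (S (dT v)) := by
      rw [pow_succ]; rfl
    have h2 : ∀ w : V, (S ^ (n + 1)) (S w) = (S ^ (n + 2)) w := by
      intro w; rw [pow_succ]; rfl
    have h2' : ∀ w : V, (S ^ n) (S w) = (S ^ (n + 1)) w := by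
      intro w; rw [pow_succ]; rfl
    rw [h1, hcomm v, map_add, map_smul, ih (S v), h2, h2']
    have h3 : (((n + 2) * r : ℕ) : ℚ) = (((n + 1) * r : ℕ) : ℚ) + (r : ℚ) := by
      push_cast; ring
    rw [h3, add_smul]
    abel

end Aux

/-- With `S`, `d_T`, `P` as before, each equivalence class in
`V / d_T V` contains exactly one element of `Ψ = ker S`: namely, `θ − d_T P θ`
is the unique representative of the class of `θ` lying in `ker S`.
Equivalently, `V = ker S ⊕ d_T(V)`. -/
theorem unique_canonical_representative {V : Type*} [AddCommGroup V] [Module ℚ V]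
    (S dT P : V →ₗ[ℚ] V) (r : ℕ) (hr : 1 ≤ r)
    (hcomm : ∀ v : V, S (dT v) = dT (S v) + (r : ℚ) • v)
    (hnil : ∀ v : V, ∃ N : ℕ, (S ^ N) v = 0)
    (hP : ∀ (θ : V) (N : ℕ), (S ^ (N + 1)) θ = 0 →
      P θ = ∑ p ∈ Finset.range (N + 1),
        ((-1 : ℚ) ^ p / ((r : ℚ) ^ (p + 1) * ((p + 1).factorial : ℚ))) •
          ((dT ^ p) ((S ^ (p + 1)) θ))) :
    (∀ θ : V,
      S (θ - dT (P θ)) = 0 ∧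
      θ - (θ - dT (P θ)) ∈ LinearMap.range dT ∧
      ∀ ψ : V, S ψ = 0 → θ - ψ ∈ LinearMap.range dT → ψ = θ - dT (P θ)) ∧
    IsCompl (LinearMap.ker S) (LinearMap.range dT) := by
  have hr0 : (r : ℚ) ≠ 0 := by
    exact Nat.cast_ne_zero.2 (by omega)
  have hfac : ∀ p : ℕ, ((p.factorial : ℚ)) ≠ 0 := fun p =>
    Nat.cast_ne_zero.2 (Nat.factorial_ne_zero p)
  set c : ℕ → ℚ := fun p => (-1 : ℚ) ^ p / ((r : ℚ) ^ (p + 1) * ((p + 1).factorial : ℚ)) with hc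
  set a : ℕ → ℚ := fun p => (-1 : ℚ) ^ p / ((r : ℚ) ^ p * (p.factorial : ℚ)) with ha
  have hca : ∀ p : ℕ, c p * (((p + 1) * r : ℕ) : ℚ) = a p := by
    intro p
    simp only [hc, ha, Nat.factorial_succ]
    push_cast
    field_simp
    ring
  have hcneg : ∀ p : ℕ, c p = -(a (p + 1)) := by
    intro p
    simp only [hc, ha]
    rw [pow_succ (-1 : ℚ)]
    ring
  have ha0 : a 0 = 1 := by simp [ha]
  -- S ∘ dT ∘ P = S
  have keyA : ∀ θ : V, S (dT (P θ)) = S θ := by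
    intro θ
    obtain ⟨N, hN⟩ := hnil θ
    have hN1 : (S ^ (N + 1)) θ = 0 := by
      rw [pow_succ']
      show S ((S ^ N) θ) = 0
      rw [hN, map_zero]
    have hN2 : (S ^ (N + 2)) θ = 0 := by
      rw [pow_succ']
      show S ((S ^ (N + 1)) θ) = 0
      rw [hN1, map_zero]
    rw [hP θ N hN1, map_sum, map_sum]
    set f : ℕ → V := fun q => a q • (dT ^ q) ((S ^ (q + 1)) θ) with hf
    have hterm : ∀ p ∈ Finset.range (N + 1),
        S (dT (c p • (dT ^ p) ((S ^ (p + 1)) θ))) = f p - f (p + 1) := by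
      intro p _
      rw [map_smul, map_smul]
      have e1 : dT ((dT ^ p) ((S ^ (p + 1)) θ)) = (dT ^ (p + 1)) ((S ^ (p + 1)) θ) := by
        rw [pow_succ' dT p]; rfl
      rw [e1, comm_dT_pow S dT r hcomm p ((S ^ (p + 1)) θ)]
      have e2 : S ((S ^ (p + 1)) θ) = (S ^ (p + 2)) θ := by
        rw [pow_succ' S (p + 1)]; rfl
      rw [e2, smul_add, smul_smul, hca p, hcneg p, hf]
      simp only [neg_smul]
      abel
    rw [Finset.sum_congr rfl hterm, Finset.sum_range_sub']
    simp [hf, ha0, hN2]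
  -- P ∘ dT = id
  have keyB : ∀ u : V, P (dT u) = u := by
    intro u
    obtain ⟨N, hN⟩ := hnil u
    have hN1 : (S ^ (N + 1)) u = 0 := by
      rw [pow_succ']
      show S ((S ^ N) u) = 0
      rw [hN, map_zero]
    have hdT : (S ^ (N + 1)) (dT u) = 0 := by
      rw [comm_S_pow S dT r hcomm N u, hN1, hN, map_zero, smul_zero, add_zero]
    rw [hP (dT u) N hdT]
    set g : ℕ → V := fun q => a q • (dT ^ q) ((S ^ q) u) with hg
    have hterm : ∀ p ∈ Finset.range (N + 1),
        c p • (dT ^ p) ((S ^ (p + 1)) (dT u)) = g p - g (p + 1) := by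
      intro p _
      rw [comm_S_pow S dT r hcomm p u, map_add, map_smul, smul_add, smul_smul, hca p]
      have e1 : (dT ^ p) (dT ((S ^ (p + 1)) u)) = (dT ^ (p + 1)) ((S ^ (p + 1)) u) := by
        rw [pow_succ]; rfl
      rw [e1, hcneg p, hg]
      simp only [neg_smul]
      abel
    rw [Finset.sum_congr rfl hterm, Finset.sum_range_sub']
    simp [hg, ha0, hN1]
  -- P vanishes on ker S
  have keyC : ∀ w : V, S w = 0 → P w = 0 := by
    intro w hw
    have h1 : (S ^ (0 + 1)) w = 0 := by simpa using hw
    rw [hP w 0 h1]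
    simp [hw]
  -- ker S ∩ range dT = 0
  have keyD : ∀ w : V, S w = 0 → w ∈ LinearMap.range dT → w = 0 := by
    intro w hw ⟨u, hu⟩
    have : u = 0 := by
      have := keyB u
      rw [hu, keyC w hw] at this
      exact this.symm
    rw [← hu, this, map_zero]
  constructor
  · intro θ
    refine ⟨?_, ?_, ?_⟩
    · rw [map_sub, keyA θ, sub_self]
    · simp only [sub_sub_cancel]
      exact ⟨P θ, rfl⟩
    · intro ψ hψ ⟨u, hu⟩
      have hd : S ((θ - dT (P θ)) - ψ) = 0 := by
        rw [map_sub, map_sub, keyA θ, hψ, sub_self, sub_zero]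
      have hrange : (θ - dT (P θ)) - ψ ∈ LinearMap.range dT := by
        have : (θ - dT (P θ)) - ψ = dT (u - P θ) := by
          rw [map_sub, hu]; abel
        exact ⟨u - P θ, this.symm⟩
      have := keyD _ hd hrange
      have h0 : ψ = θ - dT (P θ) := by
        have := sub_eq_zero.mp this
        exact this.symm
      exact h0
  · constructor
    · rw [disjoint_iff]
      ext w
      simp only [Submodule.mem_inf, LinearMap.mem_ker, Submodule.mem_bot]
      constructor
      · rintro ⟨hw, hw2⟩
        exact keyD w hw hw2
      · rintro rfl
        exact ⟨map_zero S, Submodule.zero_mem _⟩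
    · rw [codisjoint_iff, eq_top_iff]
      intro v _
      rw [Submodule.mem_sup]
      refine ⟨v - dT (P v), ?_, dT (P v), ⟨P v, rfl⟩, by abel⟩
      rw [LinearMap.mem_ker, map_sub, keyA v, sub_self]
end

section
/- In the abstract setting with a homotopy operator h for d (h d + d h = id), operators d_T, P with P d_T = id, d_T commuting with d, and S with the projection property (for θ ∈ ker S, θ − d_T P θ = θ): if θ ∈ ker S satisfies δθ = 0 where δ = (id − d_T P) d, then setting κ = h P d θ and φ = h(θ − d_T κ), one has δφ = θ. -/
/-!
Because `P` is a left inverse of `d_T`, the map `d_T` is injective, so `d (d θ) = 0` together with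
`d θ = d_T P d θ` forces `P d θ` to be closed. The homotopy then gives `d κ = P d θ`, which makes
`θ − d_T κ` closed, hence `d φ = θ − d_T κ`; finally `id − d_T P` kills `d_T κ` and fixes `θ ∈ ker S`.
-/

section

variable {R A B C : Type*} [Ring R] [AddCommGroup A] [AddCommGroup B] [AddCommGroup C]
  [Module R A] [Module R B] [Module R C]

theorem d_h_eq_self_of_closed (d : A →ₗ[R] B) (d' : B →ₗ[R] C) (h : B →ₗ[R] A)
    (h' : C →ₗ[R] B) (hh : ∀ η, h' (d' η) + d (h η) = η) {η : B} (hη : d' η = 0) :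
    d (h η) = η := by
  simpa [hη] using hh η

theorem d_eq_zero_of_d_dT_eq_zero (d : A →ₗ[R] B) (dT : A →ₗ[R] A) (dT' P' : B →ₗ[R] B)
    (hcomm : ∀ x, d (dT x) = dT' (d x)) (hPdT : ∀ y, P' (dT' y) = y) {x : A}
    (hx : d (dT x) = 0) : d x = 0 := by
  rw [← hPdT (d x), ← hcomm, hx, map_zero]

theorem sub_dT_P_sub_dT_eq (dT P : A →ₗ[R] A) (hPdT : ∀ x, P (dT x) = x) (θ κ : A) :
    (θ - dT κ) - dT (P (θ - dT κ)) = θ - dT (P θ) := by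
  rw [map_sub P, hPdT, map_sub dT]
  abel

end

/-- Abstract local exactness of the δ-sequence.  In the setting
with a homotopy operator `h` for `d` (`h d + d h = id` in degrees ≥ 1),
operators `d_T`, `P` with `P d_T = id`, `d_T` commuting with `d`, and `S` with
the projection property (`P θ = 0` for `θ ∈ ker S`, so `θ − d_T P θ = θ` there):
if `θ ∈ ker S` satisfies `δθ = 0` where `δ = (id − d_T P) d`, then setting
`κ = h P d θ` and `φ = h(θ − d_T κ)`, one has `δφ = θ`. -/
theorem local_exactness_of_delta
    {Ω : ℕ → Type*} [∀ r, AddCommGroup (Ω r)] [∀ r, Module ℚ (Ω r)]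
    (d : ∀ r, Ω r →ₗ[ℚ] Ω (r + 1)) (dT P S : ∀ r, Ω r →ₗ[ℚ] Ω r)
    (h : ∀ r, Ω (r + 1) →ₗ[ℚ] Ω r)
    (hd2 : ∀ (r : ℕ) (θ : Ω r), d (r + 1) (d r θ) = 0)
    (hcomm : ∀ (r : ℕ) (θ : Ω r), d r (dT r θ) = dT (r + 1) (d r θ))
    (hPdT : ∀ (r : ℕ) (θ : Ω (r + 1)), P (r + 1) (dT (r + 1) θ) = θ)
    (hh : ∀ (r : ℕ) (η : Ω (r + 1)), h (r + 1) (d (r + 1) η) + d r (h r η) = η)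
    (hSP : ∀ (r : ℕ) (θ : Ω r), S r θ = 0 → P r θ = 0)
    (r : ℕ) (θ : Ω (r + 1))
    (hS : S (r + 1) θ = 0)
    (hδ : d (r + 1) θ - dT (r + 2) (P (r + 2) (d (r + 1) θ)) = 0) :
    d r (h r (θ - dT (r + 1) (h (r + 1) (P (r + 2) (d (r + 1) θ))))) -
      dT (r + 1) (P (r + 1)
        (d r (h r (θ - dT (r + 1) (h (r + 1) (P (r + 2) (d (r + 1) θ))))))) = θ := by
  set κ := h (r + 1) (P (r + 2) (d (r + 1) θ))
  have hdθ : d (r + 1) θ = dT (r + 2) (P (r + 2) (d (r + 1) θ)) := sub_eq_zero.mp hδ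
  have hPdθ_closed : d (r + 2) (P (r + 2) (d (r + 1) θ)) = 0 :=
    d_eq_zero_of_d_dT_eq_zero (d (r + 2)) (dT (r + 2)) (dT (r + 3)) (P (r + 3)) (hcomm (r + 2))
      (hPdT (r + 2)) (hdθ ▸ hd2 (r + 1) θ)
  have hdκ : d (r + 1) κ = P (r + 2) (d (r + 1) θ) :=
    d_h_eq_self_of_closed (d (r + 1)) (d (r + 2)) (h (r + 1)) (h (r + 2)) (hh (r + 1)) hPdθ_closed
  have hclosed : d (r + 1) (θ - dT (r + 1) κ) = 0 := by
    rw [map_sub, hcomm, hdκ, ← hdθ, sub_self]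
  rw [d_h_eq_self_of_closed (d r) (d (r + 1)) (h r) (h (r + 1)) (hh r) hclosed,
    sub_dT_P_sub_dT_eq (dT (r + 1)) (P (r + 1)) (hPdT r), hSP (r + 1) θ hS, map_zero, sub_zero]
end

section
/- The Euler–Lagrange form ε_L = Σ_{p=0}^{k} ((−1)^p/p!) d_T^p S^p dL of any Lagrangian L satisfies S ε_L = 0; i.e., ε_L is horizontal over the base manifold E (ε_L is a combination of the dq^i only, with no dq^i_{(p)} for p ≥ 1). -/
/-- In the same jet-coordinate setting as Statement 11
(coefficients of 1-forms `θ : ι × ℕ → F`, total derivative `d_T` and vertical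
endomorphism `S` acting coefficientwise), the Euler–Lagrange form
`ε_L = Σ_{p=0}^{k} ((−1)^p/p!) d_T^p S^p dL` of any `k`-th order Lagrangian
satisfies `S ε_L = 0`, i.e. `ε_L` is horizontal over `E`: it is a combination of
the `dq^i` only, with no `dq^i_(p)` for `p ≥ 1`. -/
theorem euler_lagrange_form_horizontal {ι F : Type*} [CommRing F] [Algebra ℚ F]
    (D : F → F)
    (hDadd : ∀ a b : F, D (a + b) = D a + D b)
    (hDmul : ∀ a b : F, D (a * b) = D a * b + a * D b)
    (hDsmul : ∀ (c : ℚ) (a : F), D (c • a) = c • D a)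
    (dT1 S1 : (ι × ℕ → F) → (ι × ℕ → F))
    (hdT : ∀ (θ : ι × ℕ → F) (i : ι) (p : ℕ),
      dT1 θ (i, p) = D (θ (i, p)) + (if p = 0 then 0 else θ (i, p - 1)))
    (hS : ∀ (θ : ι × ℕ → F) (i : ι) (p : ℕ),
      S1 θ (i, p) = (p + 1) • θ (i, p + 1))
    (k : ℕ) (dL : ι × ℕ → F)
    (hord : ∀ (i : ι) (p : ℕ), k < p → dL (i, p) = 0) :
    S1 (∑ p ∈ Finset.range (k + 1),
        ((-1 : ℚ) ^ p / ((p.factorial : ℚ))) • (dT1^[p] (S1^[p] dL))) = 0 ∧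
    ∀ (i : ι) (p : ℕ),
      (∑ p ∈ Finset.range (k + 1),
        ((-1 : ℚ) ^ p / ((p.factorial : ℚ))) • (dT1^[p] (S1^[p] dL))) (i, p + 1) = 0 := by
  classical
  set c : ℕ → ℚ := fun p => ((-1 : ℚ) ^ p / ((p.factorial : ℚ))) with hc
  -- basic facts about D
  have hD0 : D 0 = 0 := by
    have := hDadd 0 0
    simpa using this
  have hDnsmul : ∀ (n : ℕ) (a : F), D (n • a) = n • D a := by
    intro n a
    rw [← Nat.cast_smul_eq_nsmul ℚ, hDsmul, Nat.cast_smul_eq_nsmul]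
  -- basic facts about dT1
  have hdTadd : ∀ θ η : ι × ℕ → F, dT1 (θ + η) = dT1 θ + dT1 η := by
    intro θ η
    funext x
    obtain ⟨i, p⟩ := x
    simp only [Pi.add_apply, hdT, hDadd]
    split <;> ring
  have hdTiteradd : ∀ (n : ℕ) (θ η : ι × ℕ → F),
      dT1^[n] (θ + η) = dT1^[n] θ + dT1^[n] η := by
    intro n
    induction n with
    | zero => intro θ η; simp
    | succ n ih =>
      intro θ η
      rw [Function.iterate_succ_apply, hdTadd, ih,
        Function.iterate_succ_apply, Function.iterate_succ_apply]
  have hdT0 : dT1 (0 : ι × ℕ → F) = 0 := by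
    funext x
    obtain ⟨i, p⟩ := x
    simp [hdT, hD0]
  have hdTiter0 : ∀ n : ℕ, dT1^[n] (0 : ι × ℕ → F) = 0 := by
    intro n
    induction n with
    | zero => simp
    | succ n ih => rw [Function.iterate_succ_apply, hdT0, ih]
  -- basic facts about S1
  have hS0 : S1 (0 : ι × ℕ → F) = 0 := by
    funext x
    obtain ⟨i, p⟩ := x
    simp [hS]
  have hSadd : ∀ θ η : ι × ℕ → F, S1 (θ + η) = S1 θ + S1 η := by
    intro θ η
    funext x
    obtain ⟨i, p⟩ := x
    simp [hS, smul_add]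
  have hSsmul : ∀ (a : ℚ) (θ : ι × ℕ → F), S1 (a • θ) = a • S1 θ := by
    intro a θ
    funext x
    obtain ⟨i, p⟩ := x
    simp only [hS, Pi.smul_apply]
    rw [smul_comm]
  have hSsum : ∀ (s : Finset ℕ) (g : ℕ → ι × ℕ → F),
      S1 (∑ p ∈ s, g p) = ∑ p ∈ s, S1 (g p) := by
    intro s g
    induction s using Finset.induction_on with
    | empty => simpa using hS0
    | insert _ _ hmem ih =>
      rw [Finset.sum_insert hmem, Finset.sum_insert hmem, hSadd, ih]
  -- the commutator identity S ∘ dT = dT ∘ S + id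
  have hSdT : ∀ θ : ι × ℕ → F, S1 (dT1 θ) = dT1 (S1 θ) + θ := by
    intro θ
    funext x
    obtain ⟨i, p⟩ := x
    simp only [Pi.add_apply, hS, hdT]
    cases p with
    | zero =>
      simp [hDnsmul]
    | succ q =>
      simp only [Nat.succ_ne_zero, if_neg, Nat.add_sub_cancel, hS, hDnsmul, if_false]
      rw [smul_add]
      have h1 : (q + 1 + 1) • θ (i, q + 1) = (q + 1) • θ (i, q + 1) + θ (i, q + 1) := by
        rw [succ_nsmul]
      rw [h1]
      abel
  -- iterated version: S ∘ dT^{n+1} = dT^{n+1} ∘ S + (n+1) dT^n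
  have hSdTiter : ∀ (n : ℕ) (θ : ι × ℕ → F),
      S1 (dT1^[n + 1] θ) = dT1^[n + 1] (S1 θ) + (n + 1) • dT1^[n] θ := by
    intro n
    induction n with
    | zero => intro θ; simpa using hSdT θ
    | succ n ih =>
      intro θ
      rw [Function.iterate_succ_apply, ih (dT1 θ), hSdT θ, hdTiteradd,
        ← Function.iterate_succ_apply]
      have h2 : (n + 1 + 1) • dT1^[n + 1] θ
          = dT1^[n + 1] θ + (n + 1) • dT1^[n + 1] θ := by
        rw [succ_nsmul]
        abel
      rw [h2, ← Function.iterate_succ_apply dT1 n θ]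
      abel
  -- S^{k+1} dL = 0
  have hSvanish : ∀ (n : ℕ) (i : ι) (p : ℕ), k < p + n → S1^[n] dL (i, p) = 0 := by
    intro n
    induction n with
    | zero => intro i p hp; exact hord i p (by omega)
    | succ n ih =>
      intro i p hp
      rw [Function.iterate_succ_apply', hS, ih i (p + 1) (by omega), smul_zero]
  have hSk1 : S1^[k + 1] dL = 0 := by
    funext x
    obtain ⟨i, p⟩ := x
    exact hSvanish (k + 1) i p (by omega)
  -- coefficient identity
  have hcfact : ∀ q : ℕ, c (q + 1) * ((q : ℚ) + 1) = -(c q) := by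
    intro q
    have hq : ((q.factorial : ℚ)) ≠ 0 := by
      exact_mod_cast Nat.cast_ne_zero.mpr q.factorial_ne_zero
    simp only [hc, Nat.factorial_succ, Nat.cast_mul, pow_succ]
    push_cast
    field_simp
  -- the main claim
  have key : S1 (∑ p ∈ Finset.range (k + 1), c p • (dT1^[p] (S1^[p] dL))) = 0 := by
    rw [hSsum]
    have hterm : ∀ q : ℕ,
        S1 (c (q + 1) • dT1^[q + 1] (S1^[q + 1] dL))
          = c (q + 1) • dT1^[q + 1] (S1^[q + 2] dL)
            - c q • dT1^[q] (S1^[q + 1] dL) := by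
      intro q
      rw [hSsmul, hSdTiter q (S1^[q + 1] dL), smul_add,
        ← Function.iterate_succ_apply' S1 (q + 1) dL]
      have h3 : c (q + 1) • ((q + 1) • dT1^[q] (S1^[q + 1] dL))
          = -(c q • dT1^[q] (S1^[q + 1] dL)) := by
        rw [← Nat.cast_smul_eq_nsmul ℚ, smul_smul]
        push_cast
        rw [hcfact q, neg_smul]
      rw [h3]
      abel
    rw [Finset.sum_range_succ']
    have h0 : S1 (c 0 • dT1^[0] (S1^[0] dL)) = c 0 • dT1^[0] (S1^[1] dL) := by
      simp only [Function.iterate_zero_apply, Function.iterate_one]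
      rw [hSsmul]
    rw [h0]
    have htel : ∑ q ∈ Finset.range k, S1 (c (q + 1) • dT1^[q + 1] (S1^[q + 1] dL))
        = c k • dT1^[k] (S1^[k + 1] dL) - c 0 • dT1^[0] (S1^[1] dL) := by
      have := Finset.sum_range_sub (f := fun q => c q • dT1^[q] (S1^[q + 1] dL)) k
      calc ∑ q ∈ Finset.range k, S1 (c (q + 1) • dT1^[q + 1] (S1^[q + 1] dL))
          = ∑ q ∈ Finset.range k,
              (c (q + 1) • dT1^[q + 1] (S1^[q + 2] dL)
                - c q • dT1^[q] (S1^[q + 1] dL)) := by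
            exact Finset.sum_congr rfl fun q _ => hterm q
        _ = c k • dT1^[k] (S1^[k + 1] dL) - c 0 • dT1^[0] (S1^[0 + 1] dL) := this
        _ = c k • dT1^[k] (S1^[k + 1] dL) - c 0 • dT1^[0] (S1^[1] dL) := rfl
    rw [htel, hSk1, hdTiter0, smul_zero]
    abel
  refine ⟨key, ?_⟩
  intro i p
  have h := congrFun key (i, p)
  rw [hS] at h
  simp only [Pi.zero_apply] at h
  rw [← Nat.cast_smul_eq_nsmul ℚ] at h
  have hne : ((p : ℚ) + 1) ≠ 0 := by positivity
  have := congrArg (fun x => ((p : ℚ) + 1)⁻¹ • x) h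
  simpa [inv_smul_smul₀ hne, smul_zero] using this
end

section
/- For a first-order Lagrangian L(q, q̇), the Euler–Lagrange expressions ε_i = ∂L/∂q^i − d_T(∂L/∂q̇^i) satisfy all the Helmholtz–Sonin conditions: (i) ∂ε_i/∂q̈^j = ∂ε_j/∂q̈^i; (ii) ∂ε_i/∂q̇^j + ∂ε_j/∂q̇^i = d_T(∂ε_i/∂q̈^j) + d_T(∂ε_j/∂q̈^i); (iii) ∂ε_i/∂q^j − (1/2) d_T(∂ε_i/∂q̇^j) + (1/4) d_T²(∂ε_i/∂q̈^j) is symmetric in i and j. -/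
namespace Stmt16

/-- Points of the (4th-order) jet space of curves in ℝⁿ: slot `p` holds the
`p`-th derivative coordinates (slot 0 = `q`, 1 = `q̇`, 2 = `q̈`, 3 = `q^(3)`,
4 = `q^(4)`). -/
abbrev Jet (n : ℕ) := Fin 5 → Fin n → ℝ

/-- Partial derivative `∂f/∂q^i_(p)`. -/
noncomputable def pd {n : ℕ} (p : Fin 5) (i : Fin n) (f : Jet n → ℝ) (x : Jet n) : ℝ :=
  deriv (fun t => f (Function.update x p (Function.update (x p) i t))) (x p i)

/-- The total time derivative `d_T = Σ_p q^i_(p+1) ∂/∂q^i_(p)`. -/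
noncomputable def dT {n : ℕ} (f : Jet n → ℝ) (x : Jet n) : ℝ :=
  ∑ p : Fin 4, ∑ i : Fin n, x p.succ i * pd p.castSucc i f x

/-- `f` depends only on the coordinates `q^i_(p)` with `p ≤ k`. -/
def OrderAtMost {n : ℕ} (k : ℕ) (f : Jet n → ℝ) : Prop :=
  ∀ x y : Jet n, (∀ p : Fin 5, (p : ℕ) ≤ k → x p = y p) → f x = f y

variable {n : ℕ}

/-- basis vector in slot (p,i) -/
noncomputable def e (p : Fin 5) (i : Fin n) : Jet n := Pi.single p (Pi.single i 1)

lemma curve_eq (x : Jet n) (p : Fin 5) (i : Fin n) :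
    (fun t => Function.update x p (Function.update (x p) i t)) =
    fun t => x + (t - x p i) • e p i := by
  funext t q k
  simp only [e, Pi.add_apply, Pi.smul_apply]
  by_cases hq : q = p
  · subst hq
    simp only [Function.update_self, Pi.single_eq_same]
    by_cases hk : k = i
    · subst hk; simp [Function.update_self]
    · simp [Function.update_of_ne hk, Pi.single_eq_of_ne hk]
  · simp [Function.update_of_ne hq, Pi.single_eq_of_ne hq]

lemma hasDerivAt_curve (x : Jet n) (p : Fin 5) (i : Fin n) (t : ℝ) :
    HasDerivAt (fun t => x + (t - x p i) • e p i) (e p i) t := by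
  have h : HasDerivAt (fun s : ℝ => s - x p i) 1 t := (hasDerivAt_id t).sub_const _
  have h2 := h.smul_const (e p i)
  rw [one_smul] at h2
  exact h2.const_add x

lemma hasDerivAt_pd {f : Jet n → ℝ} {x : Jet n} (hf : DifferentiableAt ℝ f x)
    (p : Fin 5) (i : Fin n) :
    HasDerivAt (fun t => f (Function.update x p (Function.update (x p) i t)))
      (fderiv ℝ f x (e p i)) (x p i) := by
  have hc : (fun t => f (Function.update x p (Function.update (x p) i t))) =
      fun t => f (x + (t - x p i) • e p i) :=
    funext fun t => congrArg f (congrFun (curve_eq x p i) t)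
  rw [hc]
  have hγ := hasDerivAt_curve x p i (x p i)
  have hx : x + (x p i - x p i) • e p i = x := by simp
  have hf' : HasFDerivAt f (fderiv ℝ f x) ((fun t => x + (t - x p i) • e p i) (x p i)) := by
    simpa [hx] using hf.hasFDerivAt
  exact hf'.comp_hasDerivAt (x p i) hγ

lemma pd_eq {f : Jet n → ℝ} {x : Jet n} (hf : DifferentiableAt ℝ f x)
    (p : Fin 5) (i : Fin n) : pd p i f x = fderiv ℝ f x (e p i) :=
  (hasDerivAt_pd hf p i).deriv

lemma pd_const (p : Fin 5) (i : Fin n) (c : ℝ) (x : Jet n) :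
    pd p i (fun _ => c) x = 0 := by
  simp [pd]

lemma pd_sub {f g : Jet n → ℝ} {x : Jet n} (hf : DifferentiableAt ℝ f x)
    (hg : DifferentiableAt ℝ g x) (p : Fin 5) (i : Fin n) :
    pd p i (fun y => f y - g y) x = pd p i f x - pd p i g x := by
  rw [pd_eq (hf.fun_sub hg), pd_eq hf, pd_eq hg, fderiv_fun_sub hf hg]; rfl

lemma pd_neg {f : Jet n → ℝ} {x : Jet n} (hf : DifferentiableAt ℝ f x)
    (p : Fin 5) (i : Fin n) :
    pd p i (fun y => -(f y)) x = -(pd p i f x) := by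
  rw [pd_eq hf.fun_neg, pd_eq hf, fderiv_fun_neg]; rfl

lemma pd_mul {f g : Jet n → ℝ} {x : Jet n} (hf : DifferentiableAt ℝ f x)
    (hg : DifferentiableAt ℝ g x) (p : Fin 5) (i : Fin n) :
    pd p i (fun y => f y * g y) x = f x * pd p i g x + g x * pd p i f x := by
  rw [pd_eq (hf.fun_mul hg), pd_eq hf, pd_eq hg, fderiv_fun_mul hf hg]
  simp [smul_eq_mul]

lemma pd_sum {ι : Type*} {s : Finset ι} {F : ι → Jet n → ℝ} {x : Jet n}
    (h : ∀ a ∈ s, DifferentiableAt ℝ (F a) x) (p : Fin 5) (i : Fin n) :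
    pd p i (fun y => ∑ a ∈ s, F a y) x = ∑ a ∈ s, pd p i (F a) x := by
  rw [pd_eq (DifferentiableAt.fun_sum h), fderiv_fun_sum h]
  rw [ContinuousLinearMap.sum_apply]
  exact Finset.sum_congr rfl fun a ha => (pd_eq (h a ha) p i).symm

lemma pd_smooth {f : Jet n → ℝ} (hf : ContDiff ℝ (⊤ : ℕ∞) f) (p : Fin 5) (i : Fin n) :
    ContDiff ℝ (⊤ : ℕ∞) (pd p i f) := by
  have h : pd p i f = fun x => fderiv ℝ f x (e p i) :=
    funext fun x => pd_eq (hf.differentiable (by simp) x) p i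
  rw [h]
  exact (hf.fderiv_right (by simp)).clm_apply contDiff_const

lemma pd_comm {f : Jet n → ℝ} (hf : ContDiff ℝ (⊤ : ℕ∞) f) (p q : Fin 5) (i j : Fin n)
    (x : Jet n) : pd p i (pd q j f) x = pd q j (pd p i f) x := by
  have hd : Differentiable ℝ f := hf.differentiable (by simp)
  have hfd : Differentiable ℝ (fderiv ℝ f) :=
    (hf.fderiv_right (m := (⊤ : ℕ∞)) (by simp)).differentiable (by simp)
  set f'' := fderiv ℝ (fderiv ℝ f) x with hf''
  have hsymm : ∀ v w, f'' v w = f'' w v :=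
    second_derivative_symmetric (fun y => (hd y).hasFDerivAt) (hfd x).hasFDerivAt
  have key : ∀ (p : Fin 5) (i : Fin n) (v : Jet n),
      pd p i (fun y => fderiv ℝ f y v) x = f'' (e p i) v := by
    intro p i v
    have h1 : HasFDerivAt (fun y => fderiv ℝ f y v)
        ((ContinuousLinearMap.apply ℝ ℝ v).comp f'') x :=
      (ContinuousLinearMap.apply ℝ ℝ v).hasFDerivAt.comp x (hfd x).hasFDerivAt
    rw [pd_eq h1.differentiableAt, h1.fderiv]
    rfl
  have hrw : ∀ (q : Fin 5) (j : Fin n), pd q j f = fun y => fderiv ℝ f y (e q j) :=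
    fun q j => funext fun y => pd_eq (hd y) q j
  rw [hrw q j, hrw p i, key, key, hsymm]



lemma pd_high {f : Jet n → ℝ} (hf : OrderAtMost 1 f) {p : Fin 5} (hp : 2 ≤ (p : ℕ))
    (i : Fin n) (x : Jet n) : pd p i f x = 0 := by
  unfold pd
  have h : (fun t => f (Function.update x p (Function.update (x p) i t))) =
      fun _ => f x := by
    funext t
    apply hf
    intro q hq
    rw [Function.update_of_ne (Fin.ne_of_val_ne (by omega))]
  rw [h]
  exact deriv_const _ _

lemma orderAtMost_pd {f : Jet n → ℝ} (hf : OrderAtMost 1 f) {p : Fin 5}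
    (hp : (p : ℕ) ≤ 1) (i : Fin n) : OrderAtMost 1 (pd p i f) := by
  intro x y hxy
  unfold pd
  have h1 : x p = y p := hxy p hp
  have h : (fun t => f (Function.update x p (Function.update (x p) i t))) =
      fun t => f (Function.update y p (Function.update (y p) i t)) := by
    funext t
    apply hf
    intro q hq
    by_cases hqp : q = p
    · subst hqp; simp [Function.update_self, h1]
    · simp [Function.update_of_ne hqp, hxy q hq]
  rw [h, h1]

lemma contDiff_coord (a : Fin 5) (b : Fin n) :
    ContDiff ℝ (⊤ : ℕ∞) (fun x : Jet n => x a b) := contDiff_apply_apply ℝ ℝ a b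

lemma pd_coord (a : Fin 5) (b : Fin n) (q : Fin 5) (j : Fin n) (x : Jet n) :
    pd q j (fun y : Jet n => y a b) x = if a = q ∧ b = j then 1 else 0 := by
  rcases eq_or_ne a q with rfl | hq
  · rcases eq_or_ne b j with rfl | hb
    · rw [if_pos ⟨rfl, rfl⟩]
      unfold pd
      simp only [Function.update_self]
      simp
    · rw [if_neg (by tauto)]
      unfold pd
      simp only [Function.update_self, Function.update_of_ne hb]
      exact deriv_const _ _
  · rw [if_neg (by tauto)]
    unfold pd
    simp only [Function.update_of_ne hq]
    exact deriv_const _ _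

lemma dT_smooth {f : Jet n → ℝ} (hf : ContDiff ℝ (⊤ : ℕ∞) f) : ContDiff ℝ (⊤ : ℕ∞) (dT f) := by
  show ContDiff ℝ (⊤ : ℕ∞) fun x => ∑ p : Fin 4, ∑ i : Fin n, x p.succ i * pd p.castSucc i f x
  apply ContDiff.sum
  intro p _
  apply ContDiff.sum
  intro i _
  exact (contDiff_coord p.succ i).mul (pd_smooth hf _ _)

lemma dT_zero (x : Jet n) : dT (fun _ : Jet n => (0:ℝ)) x = 0 := by
  unfold dT
  simp [pd_const]

lemma dT_congr {f g : Jet n → ℝ} (h : ∀ y, f y = g y) (x : Jet n) :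
    dT f x = dT g x := by rw [funext h]

lemma dT_neg {f : Jet n → ℝ} (hf : ContDiff ℝ (⊤ : ℕ∞) f) (x : Jet n) :
    dT (fun y => -(f y)) x = -(dT f x) := by
  unfold dT
  rw [← Finset.sum_neg_distrib]
  refine Finset.sum_congr rfl fun p _ => ?_
  rw [← Finset.sum_neg_distrib]
  refine Finset.sum_congr rfl fun i _ => ?_
  rw [pd_neg (hf.differentiable (by simp) x)]
  ring

lemma dT_sub {f g : Jet n → ℝ} (hf : ContDiff ℝ (⊤ : ℕ∞) f) (hg : ContDiff ℝ (⊤ : ℕ∞) g) (x : Jet n) :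
    dT (fun y => f y - g y) x = dT f x - dT g x := by
  unfold dT
  rw [← Finset.sum_sub_distrib]
  refine Finset.sum_congr rfl fun p _ => ?_
  rw [← Finset.sum_sub_distrib]
  refine Finset.sum_congr rfl fun i _ => ?_
  rw [pd_sub (hf.differentiable (by simp) x) (hg.differentiable (by simp) x)]
  ring

lemma pd_dT {f : Jet n → ℝ} (hf : ContDiff ℝ (⊤ : ℕ∞) f) (q : Fin 5) (j : Fin n) (x : Jet n) :
    pd q j (dT f) x = dT (pd q j f) x +
      ∑ p : Fin 4, (if (p.succ : Fin 5) = q then pd p.castSucc j f x else 0) := by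
  have hterm : ∀ (p : Fin 4) (i : Fin n),
      ContDiff ℝ (⊤ : ℕ∞) (fun y : Jet n => y p.succ i * pd p.castSucc i f y) :=
    fun p i => (contDiff_coord _ _).mul (pd_smooth hf _ _)
  have hF : ∀ p : Fin 4,
      ContDiff ℝ (⊤ : ℕ∞) (fun y : Jet n => ∑ i : Fin n, y p.succ i * pd p.castSucc i f y) :=
    fun p => ContDiff.sum fun i _ => hterm p i
  have hdelta : ∀ p : Fin 4,
      (∑ i : Fin n, pd p.castSucc i f x * (if (p.succ : Fin 5) = q ∧ i = j then 1 else 0)) =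
      (if (p.succ : Fin 5) = q then pd p.castSucc j f x else 0) := by
    intro p
    by_cases hpq : (p.succ : Fin 5) = q
    · simp [hpq, mul_ite, mul_one, mul_zero, Finset.sum_ite_eq']
    · simp [hpq]
  calc pd q j (dT f) x
      = ∑ p : Fin 4, pd q j (fun y => ∑ i : Fin n, y p.succ i * pd p.castSucc i f y) x := by
        rw [show dT f = fun y => ∑ p : Fin 4, ∑ i : Fin n, y p.succ i * pd p.castSucc i f y
          from rfl]
        exact pd_sum (fun p _ => (hF p).differentiable (by simp) x) q j
    _ = ∑ p : Fin 4, ∑ i : Fin n,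
          pd q j (fun y => y p.succ i * pd p.castSucc i f y) x := by
        exact Finset.sum_congr rfl fun p _ =>
          pd_sum (fun i _ => (hterm p i).differentiable (by simp) x) q j
    _ = ∑ p : Fin 4, ∑ i : Fin n,
          (x p.succ i * pd p.castSucc i (pd q j f) x +
            pd p.castSucc i f x * (if (p.succ : Fin 5) = q ∧ i = j then 1 else 0)) := by
        refine Finset.sum_congr rfl fun p _ => Finset.sum_congr rfl fun i _ => ?_
        rw [pd_mul ((contDiff_coord p.succ i).differentiable (by simp) x)
          ((pd_smooth hf _ _).differentiable (by simp) x), pd_coord,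
          pd_comm hf q p.castSucc j i]
    _ = dT (pd q j f) x +
        ∑ p : Fin 4, (if (p.succ : Fin 5) = q then pd p.castSucc j f x else 0) := by
        simp only [Finset.sum_add_distrib]
        congr 1
        exact Finset.sum_congr rfl fun p _ => hdelta p



lemma pd0_dT {f : Jet n → ℝ} (hf : ContDiff ℝ (⊤ : ℕ∞) f) (j : Fin n) (x : Jet n) :
    pd 0 j (dT f) x = dT (pd 0 j f) x := by
  rw [pd_dT hf]
  have : ∀ p : Fin 4, ((p.succ : Fin 5) = 0 ↔ False) := by decide
  simp [this]

lemma pd1_dT {f : Jet n → ℝ} (hf : ContDiff ℝ (⊤ : ℕ∞) f) (j : Fin n) (x : Jet n) :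
    pd 1 j (dT f) x = dT (pd 1 j f) x + pd 0 j f x := by
  rw [pd_dT hf, Fin.sum_univ_four]
  rw [if_pos (by decide), if_neg (by decide), if_neg (by decide), if_neg (by decide)]
  rw [show ((0 : Fin 4).castSucc : Fin 5) = 0 from rfl]
  ring

lemma pd2_dT {f : Jet n → ℝ} (hf : ContDiff ℝ (⊤ : ℕ∞) f) (j : Fin n) (x : Jet n) :
    pd 2 j (dT f) x = dT (pd 2 j f) x + pd 1 j f x := by
  rw [pd_dT hf, Fin.sum_univ_four]
  rw [if_neg (by decide), if_pos (by decide), if_neg (by decide), if_neg (by decide)]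
  rw [show ((1 : Fin 4).castSucc : Fin 5) = 1 from rfl]
  ring


/-- For a first-order Lagrangian `L(q,q̇)`, the Euler–Lagrange
expressions `ε_i = ∂L/∂q^i − d_T(∂L/∂q̇^i)` satisfy all the Helmholtz–Sonin
conditions:
(i) `∂ε_i/∂q̈^j = ∂ε_j/∂q̈^i`;
(ii) `∂ε_i/∂q̇^j + ∂ε_j/∂q̇^i = d_T(∂ε_i/∂q̈^j) + d_T(∂ε_j/∂q̈^i)`;
(iii) `∂ε_i/∂q^j − (1/2) d_T(∂ε_i/∂q̇^j) + (1/4) d_T²(∂ε_i/∂q̈^j)` is symmetric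
in `i` and `j`. -/
theorem euler_lagrange_satisfies_helmholtz {n : ℕ} (L : Jet n → ℝ)
    (hL : ContDiff ℝ (⊤ : ℕ∞) L) (hLord : OrderAtMost 1 L)
    (ε : Fin n → Jet n → ℝ)
    (hε : ∀ (i : Fin n) (x : Jet n), ε i x = pd 0 i L x - dT (pd 1 i L) x) :
    (∀ (i j : Fin n) (x : Jet n), pd 2 j (ε i) x = pd 2 i (ε j) x) ∧
    (∀ (i j : Fin n) (x : Jet n),
      pd 1 j (ε i) x + pd 1 i (ε j) x = dT (pd 2 j (ε i)) x + dT (pd 2 i (ε j)) x) ∧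
    (∀ (i j : Fin n) (x : Jet n),
      pd 0 j (ε i) x - (1/2) * dT (pd 1 j (ε i)) x + (1/4) * dT (dT (pd 2 j (ε i))) x =
      pd 0 i (ε j) x - (1/2) * dT (pd 1 i (ε j)) x + (1/4) * dT (dT (pd 2 i (ε j))) x) := by
  -- notation
  set a : Fin n → Jet n → ℝ := fun i => pd 0 i L with ha
  set b : Fin n → Jet n → ℝ := fun i => pd 1 i L with hb
  have hεfun : ∀ i, ε i = fun x => a i x - dT (b i) x := fun i => funext (hε i)
  have hsa : ∀ i, ContDiff ℝ (⊤ : ℕ∞) (a i) := fun i => pd_smooth hL _ _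
  have hsb : ∀ i, ContDiff ℝ (⊤ : ℕ∞) (b i) := fun i => pd_smooth hL _ _
  have hsdb : ∀ i, ContDiff ℝ (⊤ : ℕ∞) (dT (b i)) := fun i => dT_smooth (hsb i)
  have horda : ∀ i, OrderAtMost 1 (a i) := fun i => orderAtMost_pd hLord (by norm_num) i
  have hordb : ∀ i, OrderAtMost 1 (b i) := fun i => orderAtMost_pd hLord (by norm_num) i
  -- key pointwise formulas
  have h2 : ∀ i j x, pd 2 j (ε i) x = -(pd 1 j (b i) x) := by
    intro i j x
    rw [hεfun i,
      pd_sub ((hsa i).differentiable (by simp) x) ((hsdb i).differentiable (by simp) x),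
      pd_high (horda i) (by norm_num) j x,
      pd2_dT (hsb i) j x,
      dT_congr (fun y => pd_high (hordb i) (by norm_num) j y) x, dT_zero]
    ring
  have h1 : ∀ i j x, pd 1 j (ε i) x =
      pd 1 j (a i) x - dT (pd 1 j (b i)) x - pd 0 j (b i) x := by
    intro i j x
    rw [hεfun i,
      pd_sub ((hsa i).differentiable (by simp) x) ((hsdb i).differentiable (by simp) x),
      pd1_dT (hsb i) j x]
    ring
  have h0 : ∀ i j x, pd 0 j (ε i) x = pd 0 j (a i) x - dT (pd 0 j (b i)) x := by
    intro i j x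
    rw [hεfun i,
      pd_sub ((hsa i).differentiable (by simp) x) ((hsdb i).differentiable (by simp) x),
      pd0_dT (hsb i) j x]
  -- Schwarz symmetry facts
  have sAA : ∀ i j x, pd 0 j (a i) x = pd 0 i (a j) x := fun i j x => pd_comm hL 0 0 j i x
  have sAB : ∀ i j x, pd 1 j (a i) x = pd 0 i (b j) x := fun i j x => pd_comm hL 1 0 j i x
  have sBA : ∀ i j x, pd 0 j (b i) x = pd 1 i (a j) x := fun i j x => pd_comm hL 0 1 j i x
  have sBB : ∀ i j x, pd 1 j (b i) x = pd 1 i (b j) x := fun i j x => pd_comm hL 1 1 j i x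
  refine ⟨?_, ?_, ?_⟩
  · intro i j x
    rw [h2 i j x, h2 j i x, sBB i j x]
  · intro i j x
    have hdT2 : ∀ i j, dT (pd 2 j (ε i)) x = -(dT (pd 1 j (b i)) x) := by
      intro i j
      rw [dT_congr (fun y => h2 i j y) x, dT_neg (pd_smooth (hsb i) 1 j) x]
    rw [h1 i j x, h1 j i x, hdT2 i j, hdT2 j i, sAB i j x, sAB j i x,
      sBA i j x, sBA j i x]
    ring
  · intro i j x
    have hdT1 : ∀ i j, dT (pd 1 j (ε i)) x =
        dT (pd 1 j (a i)) x - dT (dT (pd 1 j (b i))) x - dT (pd 0 j (b i)) x := by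
      intro i j
      rw [dT_congr (fun y => h1 i j y) x,
        dT_sub ((pd_smooth (hsa i) 1 j).sub (dT_smooth (pd_smooth (hsb i) 1 j)))
          (pd_smooth (hsb i) 0 j) x,
        dT_sub (pd_smooth (hsa i) 1 j) (dT_smooth (pd_smooth (hsb i) 1 j)) x]
    have hdT22 : ∀ i j, dT (dT (pd 2 j (ε i))) x = -(dT (dT (pd 1 j (b i))) x) := by
      intro i j
      have hinner : ∀ y, dT (pd 2 j (ε i)) y = -(dT (pd 1 j (b i)) y) := by
        intro y
        rw [dT_congr (fun z => h2 i j z) y, dT_neg (pd_smooth (hsb i) 1 j) y]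
      rw [dT_congr hinner x, dT_neg (dT_smooth (pd_smooth (hsb i) 1 j)) x]
    rw [h0 i j x, h0 j i x, hdT1 i j, hdT1 j i, hdT22 i j, hdT22 j i]
    -- rewrite via Schwarz
    have e1 : dT (pd 0 j (b i)) x = dT (pd 1 i (a j)) x := dT_congr (fun y => sBA i j y) x
    have e2 : dT (pd 1 j (a i)) x = dT (pd 0 i (b j)) x := dT_congr (fun y => sAB i j y) x
    have e3 : dT (dT (pd 1 j (b i))) x = dT (dT (pd 1 i (b j))) x :=
      dT_congr (fun y => dT_congr (fun z => sBB i j z) y) x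
    rw [sAA i j x, e1, e2, e3]
    ring

end Stmt16
end
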